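/- arXiv:2406.11159 — 7 statements merged into one kernel-verified Lean document; each statement's English description precedes it below -/
import Mathlib

section
/- Let v > 0 and τ > 0. Every complex solution λ of the characteristic equation λ·exp(λτ) = −v has strictly negative real part if and only if v·τ < π/2. In particular, when v·τ > π/2 there exists a complex root with positive real part (divergence of asynchronous SGD), and when v·τ < π/2 all roots have negative real part (convergence). -/
/-!
Substituting `μ = λτ` turns the equation into `μ e^μ = -a` with `a = vτ`.
If `a < π/2` and `Re μ ≥ 0`, then `|μ| = a e^{-Re μ} < π/2`, so `|Im μ| < π/2`; on that strip
`Im (μ e^μ) = e^x (x sin y + y cos y)` vanishes only for `y = 0`, and a real `μ ≥ 0` has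
`μ e^μ ≥ 0`. Conversely, for `y ∈ [π/2, π)` the point `μ = -y cot y + i y` has `Re μ ≥ 0` and
`μ e^μ = -e^{-y cot y} y / sin y`, a negative real that runs from `-π/2` at `y = π/2` to `-∞`
as `y → π`; the intermediate value theorem then produces roots for every `a ≥ π/2`.
-/

open Real Filter Topology Set

lemma mul_sin_nonneg_of_abs_le_pi {y : ℝ} (hy : |y| ≤ π) : 0 ≤ y * sin y := by
  obtain ⟨hy₁, hy₂⟩ := abs_le.mp hy
  rcases le_total 0 y with h | h
  · exact mul_nonneg h (sin_nonneg_of_nonneg_of_le_pi h hy₂)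
  · exact mul_nonneg_of_nonpos_of_nonpos h (sin_nonpos_of_nonpos_of_neg_pi_le h hy₁)

lemma re_neg_of_mul_exp_eq_neg {a : ℝ} (ha₀ : 0 < a) (ha : a < π / 2) {μ : ℂ}
    (h : μ * Complex.exp μ = -a) : μ.re < 0 := by
  by_contra! hx
  have hnorm : ‖μ‖ * Real.exp μ.re = a := by
    simpa [Complex.norm_exp, abs_of_pos ha₀] using congrArg (‖·‖) h
  have him_small : |μ.im| < π / 2 := by
    have := Real.one_le_exp hx
    have := Complex.abs_im_le_norm μ
    nlinarith [norm_nonneg μ]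
  have hcos : 0 < cos μ.im := cos_pos_of_mem_Ioo (abs_lt.mp him_small)
  have him : Real.exp μ.re * (μ.re * sin μ.im + μ.im * cos μ.im) = 0 := by
    have := congrArg Complex.im h
    simp only [Complex.mul_im, Complex.exp_re, Complex.exp_im, Complex.neg_im,
      Complex.ofReal_im] at this
    linear_combination this
  have him_zero : μ.im = 0 := by
    have hsin := mul_sin_nonneg_of_abs_le_pi (y := μ.im) (by linarith [pi_pos])
    have hsum := (mul_eq_zero.mp him).resolve_left (Real.exp_pos _).ne'
    have : μ.im ^ 2 * cos μ.im = -(μ.re * (μ.im * sin μ.im)) := by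
      linear_combination μ.im * hsum
    have : μ.im ^ 2 * cos μ.im ≤ 0 := this ▸ neg_nonpos.mpr (mul_nonneg hx hsin)
    exact pow_eq_zero_iff two_ne_zero |>.mp <|
      le_antisymm (nonpos_of_mul_nonpos_left this hcos) (sq_nonneg _)
  have hre := congrArg Complex.re h
  simp [Complex.mul_re, Complex.exp_re, Complex.exp_im, him_zero] at hre
  nlinarith [Real.exp_pos μ.re]

/- The zero set of `Im (μ e^μ)` off the real axis, parametrised by `y = Im μ`; along it
`μ e^μ = -rootCurveGain y`. -/
noncomputable def rootCurve (y : ℝ) : ℂ := ⟨-y * cos y / sin y, y⟩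

noncomputable def rootCurveGain (y : ℝ) : ℝ := Real.exp (-y * cos y / sin y) * (y / sin y)

lemma rootCurve_mul_exp {y : ℝ} (hy : sin y ≠ 0) :
    rootCurve y * Complex.exp (rootCurve y) = -(rootCurveGain y : ℂ) := by
  apply Complex.ext <;>
    simp only [rootCurve, rootCurveGain, Complex.mul_re, Complex.mul_im, Complex.exp_re,
      Complex.exp_im, Complex.neg_re, Complex.neg_im, Complex.ofReal_re, Complex.ofReal_im] <;>
    field_simp
  · linear_combination -y * sin_sq_add_cos_sq y
  · ring

lemma rootCurveGain_pi_div_two : rootCurveGain (π / 2) = π / 2 := by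
  simp [rootCurveGain]

lemma sin_pos_of_mem_Ico_pi_div_two_pi {y : ℝ} (hy : y ∈ Ico (π / 2) π) : 0 < sin y :=
  sin_pos_of_pos_of_lt_pi (by linarith [hy.1, pi_pos]) hy.2

lemma rootCurve_re_nonneg {y : ℝ} (hy : y ∈ Ico (π / 2) π) : 0 ≤ (rootCurve y).re := by
  have hcos : cos y ≤ 0 := cos_nonpos_of_pi_div_two_le_of_le hy.1 (by linarith [hy.2, pi_pos])
  exact div_nonneg (by nlinarith [pi_pos, hy.1]) (sin_pos_of_mem_Ico_pi_div_two_pi hy).le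

lemma rootCurve_re_pos {y : ℝ} (hy : y ∈ Ioo (π / 2) π) : 0 < (rootCurve y).re := by
  have hcos : cos y < 0 := cos_neg_of_pi_div_two_lt_of_lt hy.1 (by linarith [hy.2, pi_pos])
  exact div_pos (by nlinarith [pi_pos, hy.1])
    (sin_pos_of_mem_Ico_pi_div_two_pi (Ioo_subset_Ico_self hy))

lemma continuousOn_rootCurveGain : ContinuousOn rootCurveGain (Ico (π / 2) π) := by
  have hsin : ∀ y ∈ Ico (π / 2) π, sin y ≠ 0 := fun y hy =>
    (sin_pos_of_mem_Ico_pi_div_two_pi hy).ne'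
  have hnum : Continuous fun y : ℝ => -y * cos y := by fun_prop
  exact (continuous_exp.comp_continuousOn
      (hnum.continuousOn.div continuous_sin.continuousOn hsin)).mul
    (continuousOn_id.div continuous_sin.continuousOn hsin)

lemma tendsto_rootCurveGain : Tendsto rootCurveGain (𝓝[<] π) atTop := by
  have hIoo : Ioo (π / 2) π ∈ 𝓝[<] π := Ioo_mem_nhdsLT (by linarith [pi_pos])
  have hsin : Tendsto sin (𝓝[<] π) (𝓝[>] 0) := by
    refine tendsto_nhdsWithin_of_tendsto_nhds_of_eventually_within _ ?_ ?_
    · simpa using (continuous_sin.continuousWithinAt (s := Iio π) (x := π)).tendsto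
    · filter_upwards [hIoo] with y hy
      exact sin_pos_of_mem_Ico_pi_div_two_pi (Ioo_subset_Ico_self hy)
  have hratio : Tendsto (fun y => y * (sin y)⁻¹) (𝓝[<] π) atTop :=
    (tendsto_id.mono_left nhdsWithin_le_nhds).pos_mul_atTop pi_pos
      (tendsto_inv_nhdsGT_zero.comp hsin)
  refine tendsto_atTop_mono' _ ?_ hratio
  filter_upwards [hIoo] with y hy
  have hy' := Ioo_subset_Ico_self hy
  rw [rootCurveGain, ← div_eq_mul_inv]
  exact le_mul_of_one_le_left
    (div_nonneg (by linarith [hy.1, pi_pos]) (sin_pos_of_mem_Ico_pi_div_two_pi hy').le)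
    (one_le_exp (rootCurve_re_nonneg hy'))

lemma exists_rootCurveGain_eq {a : ℝ} (ha : π / 2 ≤ a) :
    ∃ y ∈ Ico (π / 2) π, rootCurveGain y = a := by
  have hsub := isPreconnected_Ico.intermediate_value_Ici
    (left_mem_Ico.mpr (by linarith [pi_pos]))
    (le_principal_iff.mpr (Ico_mem_nhdsLT (by linarith [pi_pos]))) continuousOn_rootCurveGain
    tendsto_rootCurveGain
  rw [rootCurveGain_pi_div_two] at hsub
  exact hsub ha

lemma exists_mul_exp_eq_neg_re_nonneg {a : ℝ} (ha : π / 2 ≤ a) :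
    ∃ μ : ℂ, μ * Complex.exp μ = -a ∧ 0 ≤ μ.re := by
  obtain ⟨y, hy, hgain⟩ := exists_rootCurveGain_eq ha
  exact ⟨rootCurve y, hgain ▸ rootCurve_mul_exp (sin_pos_of_mem_Ico_pi_div_two_pi hy).ne',
    rootCurve_re_nonneg hy⟩

lemma exists_mul_exp_eq_neg_re_pos {a : ℝ} (ha : π / 2 < a) :
    ∃ μ : ℂ, μ * Complex.exp μ = -a ∧ 0 < μ.re := by
  obtain ⟨y, hy, hgain⟩ := exists_rootCurveGain_eq ha.le
  have hy' : y ∈ Ioo (π / 2) π := by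
    refine ⟨lt_of_le_of_ne hy.1 ?_, hy.2⟩
    rintro rfl
    exact ha.ne (rootCurveGain_pi_div_two ▸ hgain)
  exact ⟨rootCurve y, hgain ▸ rootCurve_mul_exp (sin_pos_of_mem_Ico_pi_div_two_pi hy).ne',
    rootCurve_re_pos hy'⟩

lemma mul_exp_mul_eq_neg_iff {τ : ℝ} (hτ : τ ≠ 0) (l : ℂ) (v : ℝ) :
    l * Complex.exp (l * τ) = -v ↔ l * τ * Complex.exp (l * τ) = -(v * τ : ℝ) := by
  rw [mul_right_comm, Complex.ofReal_mul, neg_mul_eq_neg_mul,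
    mul_left_inj' (Complex.ofReal_ne_zero.mpr hτ)]

/-- For `v > 0`, `τ > 0`, every complex root of `λ * exp(λ * τ) = -v` has strictly negative
real part if and only if `v * τ < π / 2`. In particular, when `v * τ > π / 2` there exists a
root with positive real part, and when `v * τ < π / 2` all roots have negative real part. -/
theorem stmt_2 (v τ : ℝ) (hv : 0 < v) (hτ : 0 < τ) :
    ((∀ l : ℂ, l * Complex.exp (l * (τ : ℂ)) = -(v : ℂ) → l.re < 0) ↔ v * τ < Real.pi / 2) ∧
    (Real.pi / 2 < v * τ →
      ∃ l : ℂ, l * Complex.exp (l * (τ : ℂ)) = -(v : ℂ) ∧ 0 < l.re) := by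
  have rescale : ∀ μ : ℂ, μ * Complex.exp μ = -(v * τ : ℝ) →
      μ / τ * Complex.exp (μ / τ * τ) = -v ∧ (μ / τ).re = μ.re / τ := fun μ hμ =>
    ⟨(mul_exp_mul_eq_neg_iff hτ.ne' _ v).mpr
        (by rwa [div_mul_cancel₀ _ (Complex.ofReal_ne_zero.mpr hτ.ne')]),
      Complex.div_ofReal_re μ τ⟩
  refine ⟨⟨fun h => ?_, fun h l hl => ?_⟩, fun h => ?_⟩
  · by_contra! hle
    obtain ⟨μ, hμ, hre⟩ := exists_mul_exp_eq_neg_re_nonneg hle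
    obtain ⟨hl, hlre⟩ := rescale μ hμ
    exact (h _ hl).not_ge (hlre ▸ div_nonneg hre hτ.le)
  · have := re_neg_of_mul_exp_eq_neg (mul_pos hv hτ) h
      ((mul_exp_mul_eq_neg_iff hτ.ne' l v).mp hl)
    rw [Complex.re_mul_ofReal] at this
    exact neg_of_mul_neg_left this hτ.le
  · obtain ⟨μ, hμ, hre⟩ := exists_mul_exp_eq_neg_re_pos h
    obtain ⟨hl, hlre⟩ := rescale μ hμ
    exact ⟨_, hl, hlre ▸ div_pos hre hτ⟩
end

section
/- Let v > 0 and let 0 < τ₁ < τ₂ with v·τ₂ ≤ 1/e. If λ₁ ∈ (−1/τ₁, 0) satisfies λ₁·exp(λ₁τ₁) = −v and λ₂ ∈ [−1/τ₂, 0) satisfies λ₂·exp(λ₂τ₂) = −v, then λ₂ < λ₁. That is, the dominant (largest) real characteristic root is strictly decreasing in the staleness τ on (0, 1/(e·v)], so a small degree of gradient staleness accelerates convergence. -/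
/-!
Write `f_τ(x) = x * exp (x * τ)`. On `[-1/τ, ∞)` the map `f_τ` is strictly increasing, while for
a fixed `x < 0` the value `f_τ(x)` strictly increases with `τ`. If `l₁ ≤ l₂`, then `l₂` also lies
to the right of `-1/τ₁`, so `-v = f_τ₁(l₁) ≤ f_τ₁(l₂) < f_τ₂(l₂) = -v`, which is absurd.
-/

open Real Set

theorem strictMonoOn_mul_exp_mul {τ : ℝ} (hτ : 0 < τ) :
    StrictMonoOn (fun x => x * exp (x * τ)) (Ici (-1 / τ)) := by
  intro a ha b _ hab
  have haτ : -1 ≤ a * τ := (div_le_iff₀ hτ).mp ha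
  have hdτ : 0 < (b - a) * τ := mul_pos (sub_pos.mpr hab) hτ
  have hE_lt : exp (-((b - a) * τ)) < 1 := exp_lt_one_iff.mpr (neg_neg_of_pos hdτ)
  have hE_gt : 1 - (b - a) * τ < exp (-((b - a) * τ)) := by
    linarith [add_one_lt_exp (neg_ne_zero.mpr hdτ.ne')]
  -- `τ (a e - b) = (1 + a τ) (e - 1) - (e - 1 + (b - a) τ)` with `e = exp (-(b - a) τ)`:
  -- a nonpositive term minus a positive one
  have haE : a * exp (-((b - a) * τ)) < b := by
    nlinarith [mul_nonneg (show 0 ≤ 1 + a * τ by linarith) (sub_nonneg.mpr hE_lt.le)]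
  have hsplit : exp (a * τ) = exp (b * τ) * exp (-((b - a) * τ)) := by
    rw [← exp_add]; ring_nf
  calc a * exp (a * τ) = (a * exp (-((b - a) * τ))) * exp (b * τ) := by rw [hsplit]; ring
    _ < b * exp (b * τ) := mul_lt_mul_of_pos_right haE (exp_pos _)

theorem strictMono_mul_exp_mul_of_neg {x : ℝ} (hx : x < 0) :
    StrictMono (fun τ => x * exp (x * τ)) := fun _ _ hτ =>
  mul_lt_mul_of_neg_left (exp_lt_exp.mpr (mul_lt_mul_of_neg_left hτ hx)) hx

theorem stmt_3_general (v τ₁ τ₂ l₁ l₂ : ℝ) (hτ₁ : 0 < τ₁) (hττ : τ₁ < τ₂)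
    (hl₁ : l₁ ∈ Set.Ioo (-1 / τ₁) 0) (he₁ : l₁ * Real.exp (l₁ * τ₁) = -v)
    (hl₂ : l₂ ∈ Set.Ico (-1 / τ₂) 0) (he₂ : l₂ * Real.exp (l₂ * τ₂) = -v) :
    l₂ < l₁ := by
  by_contra! h
  have hl₁_mem : l₁ ∈ Ici (-1 / τ₁) := le_of_lt hl₁.1
  have hl₂_mem : l₂ ∈ Ici (-1 / τ₁) := le_of_lt (hl₁.1.trans_le h)
  have : -v < -v :=
    calc -v = l₁ * exp (l₁ * τ₁) := he₁.symm
      _ ≤ l₂ * exp (l₂ * τ₁) := (strictMonoOn_mul_exp_mul hτ₁).monotoneOn hl₁_mem hl₂_mem h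
      _ < l₂ * exp (l₂ * τ₂) := strictMono_mul_exp_mul_of_neg hl₂.2 hττ
      _ = -v := he₂
  exact lt_irrefl _ this

/-- For `v > 0` and staleness values `0 < τ₁ < τ₂` with `v * τ₂ ≤ 1/e`, the dominant real
characteristic root of `λ * exp(λ * τ) = -v` is strictly decreasing in `τ`: if
`λ₁ ∈ (-1/τ₁, 0)` solves the equation for `τ₁` and `λ₂ ∈ [-1/τ₂, 0)` solves it for `τ₂`,
then `λ₂ < λ₁`. -/
theorem stmt_3 (v τ₁ τ₂ l₁ l₂ : ℝ) (hv : 0 < v) (hτ₁ : 0 < τ₁) (hττ : τ₁ < τ₂)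
    (hvτ : v * τ₂ ≤ 1 / Real.exp 1)
    (hl₁ : l₁ ∈ Set.Ioo (-1 / τ₁) 0) (he₁ : l₁ * Real.exp (l₁ * τ₁) = -v)
    (hl₂ : l₂ ∈ Set.Ico (-1 / τ₂) 0) (he₂ : l₂ * Real.exp (l₂ * τ₂) = -v) :
    l₂ < l₁ :=
  stmt_3_general v τ₁ τ₂ l₁ l₂ hτ₁ hττ hl₁ he₁ hl₂ he₂
end

section
/- Let v > 0 and τ > 0 with v·τ ≤ 1/e. Every λ ∈ [−1/τ, 0) satisfying λ·exp(λτ) = −v obeys λ ≥ −e·v, with equality if and only if v·τ = 1/e. Hence the fastest achievable decay rate of the dominant characteristic root is −e·v, attained exactly at the staleness τ = 1/(e·v). -/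
/-!
Put `x = λτ ∈ [-1, 0)`. Then `-e v = λ exp (x + 1) ≤ λ`, because `λ < 0` and `exp (x + 1) ≥ 1`,
with equality exactly when `x = -1`. On the other hand `v τ = -x exp x`, and `x exp x` attains
its minimum `-1/e` only at `x = -1`, so `v τ = 1/e` is the same condition.
-/

open Real

theorem Real.neg_exp_neg_one_lt_mul_exp {x : ℝ} (hx : x ≠ -1) : -exp (-1) < x * exp x := by
  have h : -x < exp (-(x + 1)) := by
    simpa using add_one_lt_exp (x := -(x + 1)) (by contrapose! hx; linarith)
  have hprod : exp (-(x + 1)) * exp x = exp (-1) := by rw [← exp_add]; ring_nf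
  linarith [mul_lt_mul_of_pos_right h (exp_pos x)]

theorem Real.mul_exp_eq_neg_exp_neg_one_iff {x : ℝ} : x * exp x = -exp (-1) ↔ x = -1 := by
  refine ⟨fun h => ?_, fun h => by rw [h]; ring⟩
  by_contra hx
  exact (neg_exp_neg_one_lt_mul_exp hx).ne' h

theorem stmt_4_general (v τ : ℝ) (hτ : 0 < τ) :
    ∀ l : ℝ, l ∈ Set.Ico (-1 / τ) 0 → l * Real.exp (l * τ) = -v →
      -(Real.exp 1 * v) ≤ l ∧ (l = -(Real.exp 1 * v) ↔ v * τ = 1 / Real.exp 1) := by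
  rintro l ⟨hl, hl0⟩ hchar
  set x := l * τ with hx_def
  have hx : -1 ≤ x := by rwa [div_le_iff₀ hτ] at hl
  have hrate : -(exp 1 * v) = l * exp (x + 1) := by rw [exp_add, ← neg_eq_iff_eq_neg.2 hchar]; ring
  have hvτ : v * τ = -(x * exp x) := by rw [hx_def, ← neg_eq_iff_eq_neg.2 hchar]; ring
  refine ⟨?_, ?_⟩
  · rw [hrate]
    exact mul_le_of_one_le_right hl0.le (one_le_exp (by linarith))
  · calc l = -(exp 1 * v) ↔ exp (x + 1) = 1 := by
          rw [hrate, eq_comm, mul_eq_left₀ hl0.ne]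
      _ ↔ x = -1 := by rw [exp_eq_one_iff, add_eq_zero_iff_eq_neg]
      _ ↔ v * τ = 1 / exp 1 := by
          rw [← mul_exp_eq_neg_exp_neg_one_iff, hvτ, exp_neg, one_div, neg_eq_iff_eq_neg]

/-- For `v > 0`, `τ > 0` with `v * τ ≤ 1/e`, every `λ ∈ [-1/τ, 0)` satisfying
`λ * exp(λ * τ) = -v` obeys `λ ≥ -e * v`, with equality iff `v * τ = 1/e`. -/
theorem stmt_4 (v τ : ℝ) (hv : 0 < v) (hτ : 0 < τ) (hvτ : v * τ ≤ 1 / Real.exp 1) :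
    ∀ l : ℝ, l ∈ Set.Ico (-1 / τ) 0 → l * Real.exp (l * τ) = -v →
      -(Real.exp 1 * v) ≤ l ∧ (l = -(Real.exp 1 * v) ↔ v * τ = 1 / Real.exp 1) :=
  stmt_4_general v τ hτ
end

section
/- Let v < 0. There exist constants C > 0 and δ > 0 such that for every τ ∈ (0, δ) and every λ > 0 with λ·exp(λτ) = −v, one has |λ − (−v)·(1 + v·τ)| ≤ C·τ². That is, the positive characteristic root admits the expansion λ = −v(1 + vτ) + O(τ²) as τ → 0⁺. -/
/-!
Put `μ = -v > 0` and `x = λτ > 0`, so that `λ = μ e^{-x}`. Then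
`λ - μ(1 - μτ) = μ (e^{-x} - 1 + x) + μτ (μ - λ)`.
Both terms are nonnegative because `1 - x ≤ e^{-x}`, and each is at most `μ³τ²`: the first
since `e^{-x} ≤ 1 - x + x²` and `x ≤ μτ`, the second since `μ - λ = μ(1 - e^{-x}) ≤ μx ≤ μ²τ`.
-/

open Real

lemma Real.exp_neg_le_one_sub_add_sq {x : ℝ} (hx : 0 ≤ x) : exp (-x) ≤ 1 - x + x ^ 2 := by
  have hprod : exp (-x) * (1 + x) ≤ 1 := by
    calc exp (-x) * (1 + x) ≤ exp (-x) * exp x := by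
          gcongr
          linarith [add_one_le_exp x]
      _ = 1 := by rw [← exp_add, neg_add_cancel, exp_zero]
  -- `(1 - x + x²)(1 + x) = 1 + x³ ≥ 1`
  have hcube : 1 ≤ (1 - x + x ^ 2) * (1 + x) := by nlinarith [pow_nonneg hx 3]
  exact le_of_mul_le_mul_right (hprod.trans hcube) (by linarith)

section CharacteristicRoot

variable {μ τ l : ℝ}

lemma eq_mul_exp_neg_of_mul_exp_eq (h : l * exp (l * τ) = μ) : l = μ * exp (-(l * τ)) := by
  rw [← h, mul_assoc, ← exp_add, add_neg_cancel, exp_zero, mul_one]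

lemma le_of_mul_exp_eq (hl : 0 < l) (hτ : 0 ≤ τ) (h : l * exp (l * τ) = μ) : l ≤ μ := by
  rw [← h]
  exact le_mul_of_one_le_right hl.le (one_le_exp (mul_nonneg hl.le hτ))

lemma sub_le_sq_mul_of_mul_exp_eq (hl : 0 < l) (hτ : 0 ≤ τ) (h : l * exp (l * τ) = μ) :
    μ - l ≤ μ ^ 2 * τ := by
  have hlμ := le_of_mul_exp_eq hl hτ h
  have hμ : 0 ≤ μ := hl.le.trans hlμ
  calc μ - l = μ * (1 - exp (-(l * τ))) := by
        conv_lhs => rw [eq_mul_exp_neg_of_mul_exp_eq h]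
        ring
    _ ≤ μ * (l * τ) := by gcongr; linarith [one_sub_le_exp_neg (l * τ)]
    _ ≤ μ * (μ * τ) := by gcongr
    _ = μ ^ 2 * τ := by ring

lemma sub_one_sub_mul_eq_of_mul_exp_eq (h : l * exp (l * τ) = μ) :
    l - μ * (1 - μ * τ) = μ * (exp (-(l * τ)) - 1 + l * τ) + μ * τ * (μ - l) := by
  conv_lhs => rw [eq_mul_exp_neg_of_mul_exp_eq h]
  ring

lemma abs_sub_one_sub_mul_le_of_mul_exp_eq (hl : 0 < l) (hτ : 0 ≤ τ)
    (h : l * exp (l * τ) = μ) : |l - μ * (1 - μ * τ)| ≤ 2 * μ ^ 3 * τ ^ 2 := by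
  have hlμ := le_of_mul_exp_eq hl hτ h
  have hμ : 0 ≤ μ := hl.le.trans hlμ
  have hx : 0 ≤ l * τ := mul_nonneg hl.le hτ
  have hexp_lower : 0 ≤ exp (-(l * τ)) - 1 + l * τ := by
    linarith [one_sub_le_exp_neg (l * τ)]
  have hexp_upper : exp (-(l * τ)) - 1 + l * τ ≤ μ ^ 2 * τ ^ 2 :=
    calc exp (-(l * τ)) - 1 + l * τ ≤ (l * τ) ^ 2 := by
          linarith [exp_neg_le_one_sub_add_sq hx]
      _ ≤ (μ * τ) ^ 2 := by gcongr
      _ = μ ^ 2 * τ ^ 2 := by ring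
  have hgap := sub_le_sq_mul_of_mul_exp_eq hl hτ h
  rw [sub_one_sub_mul_eq_of_mul_exp_eq h, abs_of_nonneg (by positivity)]
  calc μ * (exp (-(l * τ)) - 1 + l * τ) + μ * τ * (μ - l)
      ≤ μ * (μ ^ 2 * τ ^ 2) + μ * τ * (μ ^ 2 * τ) := by gcongr
    _ = 2 * μ ^ 3 * τ ^ 2 := by ring

end CharacteristicRoot

/-- For `v < 0`, the positive characteristic root of `λ * exp(λ * τ) = -v` admits the
expansion `λ = -v(1 + vτ) + O(τ²)` as `τ → 0⁺`. -/
theorem stmt_9 (v : ℝ) (hv : v < 0) :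
    ∃ C > 0, ∃ δ > 0, ∀ τ ∈ Set.Ioo (0 : ℝ) δ, ∀ l : ℝ, 0 < l →
      l * Real.exp (l * τ) = -v → |l - (-v) * (1 + v * τ)| ≤ C * τ ^ 2 := by
  refine ⟨2 * (-v) ^ 3, mul_pos two_pos (pow_pos (neg_pos.mpr hv) 3), 1, one_pos, ?_⟩
  rintro τ ⟨hτ, -⟩ l hl h
  have hbound := abs_sub_one_sub_mul_le_of_mul_exp_eq hl hτ.le h
  rwa [show 1 - -v * τ = 1 + v * τ by ring] at hbound
end

section
/- There exists a unique real number ϖ ∈ (−2, 0) such that (ϖ + 2)·exp(−(ϖ + 2)) = 2·exp(−2); moreover this ϖ satisfies 2ϖ·(exp(−ϖ) − 1) + ϖ²·exp(−ϖ) = 0, i.e., it is a critical point of g(ω) = ω²/(exp(−ω) − 1). -/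
/-!
Substituting `x = ϖ + 2`, the equation reads `f x = f 2` for `f x = x e^{-x}`, which increases
on `(-∞, 1]` and decreases on `[1, ∞)`. Since `f 0 = 0 < f 2 < f 1` (as `2 < e`), the intermediate
value theorem gives a root in `(0, 1)`, and monotonicity rules out a second one below `2`.
The critical-point identity is `ϖ ((ϖ + 2) e^{-ϖ} - 2) = 0`, whose second factor vanishes by the
equation.
-/

open Real Set

lemma hasDerivAt_mul_exp_neg (x : ℝ) :
    HasDerivAt (fun x => x * exp (-x)) ((1 - x) * exp (-x)) x :=
  ((hasDerivAt_id' x).fun_mul (hasDerivAt_neg x).exp).congr_deriv (by ring)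

lemma strictMonoOn_mul_exp_neg : StrictMonoOn (fun x => x * exp (-x)) (Iic 1) := by
  refine strictMonoOn_of_deriv_pos (convex_Iic 1) (by fun_prop) fun x hx => ?_
  rw [interior_Iic] at hx
  rw [(hasDerivAt_mul_exp_neg x).deriv]
  exact mul_pos (sub_pos.2 hx) (exp_pos _)

lemma strictAntiOn_mul_exp_neg : StrictAntiOn (fun x => x * exp (-x)) (Ici 1) := by
  refine strictAntiOn_of_deriv_neg (convex_Ici 1) (by fun_prop) fun x hx => ?_
  rw [interior_Ici] at hx
  rw [(hasDerivAt_mul_exp_neg x).deriv]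
  exact mul_neg_of_neg_of_pos (sub_neg.2 hx) (exp_pos _)

lemma exists_mem_Ioo_mul_exp_neg_eq {y : ℝ} (hy : y ∈ Ioo 0 (exp (-1))) :
    ∃ x ∈ Ioo (0 : ℝ) 1, x * exp (-x) = y := by
  have hy' : y ∈ Ioo ((fun x => x * exp (-x)) 0) ((fun x => x * exp (-x)) 1) := by
    simpa using hy
  exact intermediate_value_Ioo zero_le_one (by fun_prop) hy'

lemma lt_one_of_mul_exp_neg_eq {x a : ℝ} (ha : 1 ≤ a) (hx : x < a)
    (h : x * exp (-x) = a * exp (-a)) : x < 1 := by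
  by_contra! hx1
  exact (strictAntiOn_mul_exp_neg hx1 ha hx).ne' h

lemma eq_of_mul_exp_neg_eq {x y a : ℝ} (ha : 1 ≤ a) (hx : x < a) (hy : y < a)
    (hxa : x * exp (-x) = a * exp (-a)) (hya : y * exp (-y) = a * exp (-a)) : x = y :=
  strictMonoOn_mul_exp_neg.injOn (lt_one_of_mul_exp_neg_eq ha hx hxa).le
    (lt_one_of_mul_exp_neg_eq ha hy hya).le (hxa.trans hya.symm)

lemma two_mul_exp_neg_two_lt_exp_neg_one : 2 * exp (-2) < exp (-1) := by
  have h2e : 2 < exp 1 := by linarith [add_one_lt_exp one_ne_zero]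
  have : exp (-1) = exp 1 * exp (-2) := by rw [← exp_add]; norm_num
  rw [this]
  exact mul_lt_mul_of_pos_right h2e (exp_pos _)

lemma add_two_mul_exp_neg_eq_two {w : ℝ} (h : (w + 2) * exp (-(w + 2)) = 2 * exp (-2)) :
    (w + 2) * exp (-w) = 2 := by
  rw [neg_add, exp_add, ← mul_assoc] at h
  exact mul_right_cancel₀ (exp_ne_zero _) h

/-- There is a unique `ϖ ∈ (-2, 0)` with `(ϖ + 2) exp(-(ϖ + 2)) = 2 exp(-2)`; moreover any
such `ϖ` satisfies `2ϖ(exp(-ϖ) - 1) + ϖ² exp(-ϖ) = 0`, i.e. it is a critical point of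
`g(ω) = ω² / (exp(-ω) - 1)`. -/
theorem stmt_12 :
    (∃! w : ℝ, w ∈ Set.Ioo (-2 : ℝ) 0 ∧
      (w + 2) * Real.exp (-(w + 2)) = 2 * Real.exp (-2)) ∧
    (∀ w : ℝ, w ∈ Set.Ioo (-2 : ℝ) 0 →
      (w + 2) * Real.exp (-(w + 2)) = 2 * Real.exp (-2) →
      2 * w * (Real.exp (-w) - 1) + w ^ 2 * Real.exp (-w) = 0) := by
  refine ⟨?_, fun w _ h => ?_⟩
  · obtain ⟨x, hx, hfx⟩ :=
      exists_mem_Ioo_mul_exp_neg_eq ⟨by positivity, two_mul_exp_neg_two_lt_exp_neg_one⟩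
    refine ⟨x - 2, ⟨⟨by linarith [hx.1], by linarith [hx.2]⟩, by simpa using hfx⟩, ?_⟩
    rintro y ⟨hy, hfy⟩
    have hy2 : y + 2 < 2 := by linarith [hy.2]
    have hx2 : x < 2 := by linarith [hx.2]
    linarith [eq_of_mul_exp_neg_eq one_le_two hy2 hx2 hfy hfx]
  · have h' := add_two_mul_exp_neg_eq_two h
    linear_combination w * h'
end

section
/- Let ζ > 0 and θ > 0 with ζ·θ ≤ π. Then the purely imaginary number λ = iθ satisfies the characteristic equation ζ·λ² = exp(−ζλ) − 1 (with exp the complex exponential) if and only if ζ = π²/2 and θ = 2/π. -/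
/-!
On the imaginary axis the equation splits into `sin (ζθ) = 0` and `cos (ζθ) = 1 - ζθ²`. On
`(0, π]` the first forces `ζθ = π`, so the second becomes `ζθ² = 2`, which pins down `ζ` and `θ`.
-/

open Complex in
theorem ofReal_mul_I_mul_ofReal_sq_eq_exp_sub_one_iff (ζ θ : ℝ) :
    (ζ : ℂ) * (I * θ) ^ 2 = exp (-(ζ : ℂ) * (I * θ)) - 1 ↔
      Real.cos (ζ * θ) = 1 - ζ * θ ^ 2 ∧ Real.sin (ζ * θ) = 0 := by
  have hexp : -(ζ : ℂ) * (I * θ) = ((-(ζ * θ) : ℝ) : ℂ) * I := by push_cast; ring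
  have hlhs : (ζ : ℂ) * (I * θ) ^ 2 = ((-(ζ * θ ^ 2) : ℝ) : ℂ) := by
    push_cast; ring_nf; rw [I_sq]; ring
  rw [hexp, hlhs, exp_mul_I, ← ofReal_cos, ← ofReal_sin, Complex.ext_iff]
  simp only [sub_re, sub_im, add_re, add_im, mul_re, mul_im, ofReal_re, ofReal_im, I_re, I_im,
    one_re, one_im, Real.cos_neg, Real.sin_neg]
  constructor
  · rintro ⟨hre, him⟩
    constructor <;> linarith
  · rintro ⟨hcos, hsin⟩
    constructor <;> simp [hcos, hsin]

theorem Real.eq_pi_of_sin_eq_zero {x : ℝ} (hx₀ : 0 < x) (hxπ : x ≤ Real.pi)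
    (hsin : Real.sin x = 0) : x = Real.pi := by
  refine hxπ.eq_or_lt.resolve_right fun hlt => ?_
  exact (Real.sin_pos_of_pos_of_lt_pi hx₀ hlt).ne' hsin

theorem eq_sq_div_two_and_eq_two_div_of_mul_eq {ζ θ c : ℝ} (hc : c ≠ 0) (h₁ : ζ * θ = c)
    (h₂ : ζ * θ ^ 2 = 2) : ζ = c ^ 2 / 2 ∧ θ = 2 / c := by
  have hθ : θ = 2 / c := by
    rw [eq_div_iff hc, ← h₁, ← h₂]; ring
  refine ⟨?_, hθ⟩
  rw [hθ] at h₁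
  field_simp at h₁ ⊢
  linarith

/-- For `ζ > 0`, `θ > 0` with `ζ θ ≤ π`, the purely imaginary number `λ = i θ` satisfies the
characteristic equation `ζ λ² = exp(-ζ λ) - 1` if and only if `ζ = π²/2` and `θ = 2/π`. -/
theorem stmt_13 (ζ θ : ℝ) (hζ : 0 < ζ) (hθ : 0 < θ) (h : ζ * θ ≤ Real.pi) :
    (ζ : ℂ) * (Complex.I * (θ : ℂ)) ^ 2 =
        Complex.exp (-(ζ : ℂ) * (Complex.I * (θ : ℂ))) - 1 ↔
    (ζ = Real.pi ^ 2 / 2 ∧ θ = 2 / Real.pi) := by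
  rw [ofReal_mul_I_mul_ofReal_sq_eq_exp_sub_one_iff]
  constructor
  · rintro ⟨hcos, hsin⟩
    have hπ : ζ * θ = Real.pi := Real.eq_pi_of_sin_eq_zero (mul_pos hζ hθ) h hsin
    rw [hπ, Real.cos_pi] at hcos
    exact eq_sq_div_two_and_eq_two_div_of_mul_eq Real.pi_ne_zero hπ (by linarith)
  · rintro ⟨rfl, rfl⟩
    have hπ : Real.pi ^ 2 / 2 * (2 / Real.pi) = Real.pi := by field_simp
    rw [hπ, Real.cos_pi, Real.sin_pi]
    constructor
    · field_simp
      ring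
    · rfl
end

section
/- Let K, B, J be natural numbers with B ≤ K, and let A : ℕ → Finset (Fin K) be any sequence of sets of workers with card(A_j) = B for every j (the B workers whose gradients trigger the j-th update). Define s : Fin K → ℕ → ℕ by s(κ, 0) = 0 and s(κ, j+1) = s(κ, j) if κ ∈ A_{j+1}, and s(κ, j+1) = s(κ, j) + B otherwise. Then Σ_{κ} s(κ, J) = (K − B)·B·J. Consequently, since BJ gradients are received in J iterations, the average step staleness per received gradient in B-ASGD without gradient dropout equals K − B. -/
open Finset

theorem Finset.sum_ite_mem_zero {ι M : Type*} [Fintype ι] [DecidableEq ι] [AddCommMonoid M]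
    (S : Finset ι) (c : M) :
    ∑ i, (if i ∈ S then 0 else c) = (Fintype.card ι - #S) • c := by
  rw [sum_ite, sum_const_zero, sum_const, zero_add, filter_not, filter_mem_eq_inter, univ_inter,
    card_sdiff_of_subset (subset_univ S), card_univ]

theorem sum_staleness_succ {ι : Type*} [Fintype ι] [DecidableEq ι] (B : ℕ)
    (A : ℕ → Finset ι) (hA : ∀ j, #(A j) = B) (s : ι → ℕ → ℕ)
    (hs : ∀ κ j, s κ (j + 1) = if κ ∈ A (j + 1) then s κ j else s κ j + B) (j : ℕ) :
    ∑ κ, s κ (j + 1) = ∑ κ, s κ j + (Fintype.card ι - B) * B := by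
  have hs' : ∀ κ, s κ (j + 1) = s κ j + if κ ∈ A (j + 1) then 0 else B := fun κ => by
    rw [hs]; split_ifs <;> rfl
  simp only [hs', sum_add_distrib, sum_ite_mem_zero, hA, smul_eq_mul]

theorem stmt_14_general (K B J : ℕ) (A : ℕ → Finset (Fin K))
    (hA : ∀ j, (A j).card = B)
    (s : Fin K → ℕ → ℕ)
    (hs0 : ∀ κ, s κ 0 = 0)
    (hs : ∀ κ j, s κ (j + 1) = if κ ∈ A (j + 1) then s κ j else s κ j + B) :
    ∑ κ : Fin K, s κ J = (K - B) * B * J := by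
  induction J with
  | zero => simp [hs0]
  | succ j ih =>
    rw [sum_staleness_succ B A hA s hs, ih, Fintype.card_fin]
    ring

/-- In `B`-ASGD with `K` workers and any sequence of triggering sets `A j` of size `B`, the
staleness accumulator `s`, defined by `s κ 0 = 0`, `s κ (j+1) = s κ j` if `κ ∈ A (j+1)` and
`s κ (j+1) = s κ j + B` otherwise, satisfies `∑ κ, s κ J = (K - B) * B * J`; hence the
average step staleness per received gradient equals `K - B`. -/
theorem stmt_14 (K B J : ℕ) (hBK : B ≤ K) (A : ℕ → Finset (Fin K))
    (hA : ∀ j, (A j).card = B)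
    (s : Fin K → ℕ → ℕ)
    (hs0 : ∀ κ, s κ 0 = 0)
    (hs : ∀ κ j, s κ (j + 1) = if κ ∈ A (j + 1) then s κ j else s κ j + B) :
    ∑ κ : Fin K, s κ J = (K - B) * B * J :=
  stmt_14_general K B J A hA s hs0 hs
end
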